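/- Let X be a Banach space and B : X × X × ... × X → X an m-linear continuous operator (m ≥ 2) satisfying ‖B(u₁,...,u_m)‖ ≤ M‖u₁‖⋯‖u_m‖ for some M > 0. Let ε > 0 satisfy m(2ε)^{m-1} M < 1. Then for every y ∈ X with ‖y‖ ≤ ε, the equation u = y + B(u,...,u) has a unique solution u ∈ X with ‖u‖ ≤ 2ε. -/

import Mathlib

/-- Picard-type contraction: if `B` is a bounded `m`-linear operator on a Banach
space `X` with `‖B u‖ ≤ M ∏ ‖u i‖`, `ε > 0` satisfies `m (2ε)^{m-1} M < 1`, then for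
every `y` with `‖y‖ ≤ ε` the equation `u = y + B(u,…,u)` has a unique solution with
`‖u‖ ≤ 2ε`. -/
theorem stmt_0 {X : Type*} [NormedAddCommGroup X] [NormedSpace ℝ X] [CompleteSpace X]
    (m : ℕ) (hm : 2 ≤ m)
    (B : ContinuousMultilinearMap ℝ (fun _ : Fin m => X) X) (M : ℝ) (hM : 0 < M)
    (hB : ∀ u : Fin m → X, ‖B u‖ ≤ M * ∏ i, ‖u i‖)
    (ε : ℝ) (hε : 0 < ε) (hsmall : (m : ℝ) * (2 * ε) ^ (m - 1) * M < 1)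
    (y : X) (hy : ‖y‖ ≤ ε) :
    ∃! u : X, ‖u‖ ≤ 2 * ε ∧ u = y + B (fun _ => u) := by
  have hmpos : 0 < m := by omega
  haveI : Nonempty (Fin m) := ⟨⟨0, hmpos⟩⟩
  set k : ℝ := (m : ℝ) * (2 * ε) ^ (m - 1) * M with hkdef
  have hk0 : 0 ≤ k := by positivity
  have hk1 : k < 1 := hsmall
  have hBn : ‖B‖ ≤ M := B.opNorm_le_bound hM.le hB
  have hconst : ∀ u : X, ‖(fun _ : Fin m => u)‖ = ‖u‖ := fun u => pi_norm_const u
  -- value bound on the diagonal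
  have hval : ∀ u : X, ‖u‖ ≤ 2 * ε → ‖B (fun _ => u)‖ ≤ M * (2 * ε) ^ m := by
    intro u hu
    calc ‖B (fun _ => u)‖ ≤ M * ∏ _i : Fin m, ‖u‖ := hB _
    _ = M * ‖u‖ ^ m := by rw [Finset.prod_const, Finset.card_univ, Fintype.card_fin]
    _ ≤ M * (2 * ε) ^ m := by
        gcongr
  have hhalf : (2 * ε) ^ (m - 1) * M ≤ 1 / 2 := by
    have h2 : (2 : ℝ) ≤ (m : ℝ) := by exact_mod_cast hm
    nlinarith [pow_nonneg (by positivity : (0:ℝ) ≤ 2 * ε) (m - 1)]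
  have hpow : M * (2 * ε) ^ m ≤ ε := by
    have : (2 * ε) ^ m = (2 * ε) ^ (m - 1) * (2 * ε) := by
      rw [← pow_succ]; congr 1; omega
    rw [this]; nlinarith
  have hself : ∀ u : X, ‖u‖ ≤ 2 * ε → ‖y + B (fun _ => u)‖ ≤ 2 * ε := by
    intro u hu
    calc ‖y + B (fun _ => u)‖ ≤ ‖y‖ + ‖B (fun _ => u)‖ := norm_add_le _ _
    _ ≤ ε + M * (2 * ε) ^ m := add_le_add hy (hval u hu)
    _ ≤ 2 * ε := by linarith
  have key : ∀ u v : X, ‖u‖ ≤ 2 * ε → ‖v‖ ≤ 2 * ε →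
      ‖B (fun _ => u) - B (fun _ => v)‖ ≤ k * ‖u - v‖ := by
    intro u v hu hv
    have h := B.norm_image_sub_le (fun _ => u) (fun _ => v)
    have hsub : (fun _ : Fin m => u) - (fun _ : Fin m => v) = (fun _ : Fin m => u - v) := rfl
    rw [hsub, hconst, hconst, hconst, Fintype.card_fin] at h
    calc ‖B (fun _ => u) - B (fun _ => v)‖
        ≤ ‖B‖ * m * max ‖u‖ ‖v‖ ^ (m - 1) * ‖u - v‖ := h
      _ ≤ M * m * (2 * ε) ^ (m - 1) * ‖u - v‖ := by
          gcongr
          exact max_le hu hv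
      _ = k * ‖u - v‖ := by rw [hkdef]; ring
  -- work on the closed ball of radius 2ε
  let S : Set X := Metric.closedBall 0 (2 * ε)
  have hmem : ∀ u : X, u ∈ S ↔ ‖u‖ ≤ 2 * ε := by
    intro u; rw [Metric.mem_closedBall, dist_zero_right]
  have hScl : IsClosed S := Metric.isClosed_closedBall
  haveI : CompleteSpace S := hScl.completeSpace_coe
  haveI : Nonempty S := ⟨⟨0, (hmem 0).mpr (by rw [norm_zero]; positivity)⟩⟩
  let g : S → S := fun u => ⟨y + B (fun _ => (u : X)),
    (hmem _).mpr (hself u ((hmem _).mp u.2))⟩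
  have hgc : ContractingWith ⟨k, hk0⟩ g := by
    constructor
    · exact_mod_cast hk1
    · apply LipschitzWith.of_dist_le_mul
      intro u v
      rw [Subtype.dist_eq, Subtype.dist_eq, dist_eq_norm, dist_eq_norm]
      have e : (y + B (fun _ => (u : X))) - (y + B (fun _ => (v : X)))
          = B (fun _ => (u : X)) - B (fun _ => (v : X)) := by abel
      show ‖(y + B (fun _ => (u : X))) - (y + B (fun _ => (v : X)))‖ ≤ _
      rw [e]
      exact key _ _ ((hmem _).mp u.2) ((hmem _).mp v.2)
  let u₀ : S := ContractingWith.fixedPoint g hgc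
  have hfix : g u₀ = u₀ := hgc.fixedPoint_isFixedPt
  have huu : (u₀ : X) = y + B (fun _ => (u₀ : X)) := (congrArg Subtype.val hfix).symm
  refine ⟨(u₀ : X), ⟨(hmem _).mp u₀.2, huu⟩, ?_⟩
  rintro v ⟨hv1, hv2⟩
  have e : v - (u₀ : X) = B (fun _ => v) - B (fun _ => (u₀ : X)) := by
    conv_lhs => rw [hv2]
    conv_lhs => rw [huu]
    abel
  have hd : ‖v - (u₀ : X)‖ ≤ k * ‖v - (u₀ : X)‖ := by
    calc ‖v - (u₀ : X)‖ = ‖B (fun _ => v) - B (fun _ => (u₀ : X))‖ := by rw [e]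
    _ ≤ k * ‖v - (u₀ : X)‖ := key _ _ hv1 ((hmem _).mp u₀.2)
  have hz : ‖v - (u₀ : X)‖ = 0 := by nlinarith [norm_nonneg (v - (u₀ : X))]
  exact sub_eq_zero.mp (norm_eq_zero.mp hz)
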